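/- arXiv:1607.07402 — 5 statements merged into one kernel-verified Lean document; each statement's English description precedes it below -/
import Mathlib

section
/- Let P(t) be a differentiable family of symmetric invertible m×m real matrices solving the Riccati differential equation Ṗ = A₁(t)P + P A₁(t)ᵀ + Q(t) − P C₁(t)ᵀ R(t)⁻¹ C₁(t) P, where A₁(t) is m×m, C₁(t) is p×m, Q(t) is symmetric m×m, and R(t) is symmetric invertible p×p. Let η̃(t) be a differentiable solution of the error equation η̃̇ = [A₁(t) − P(t)C₁(t)ᵀR(t)⁻¹C₁(t)] η̃. Then the function V₂(t) = η̃(t)ᵀ P(t)⁻¹ η̃(t) satisfies the identity dV₂/dt = − η̃ᵀ P⁻¹ (Q + P C₁ᵀ R⁻¹ C₁ P) P⁻¹ η̃ for all t. -/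
/-!
Along the error dynamics `η̇ = Bη`, the derivative of `ηᵀMη` is `ηᵀ(BᵀM + Ṁ + MB)η`. For
`M = P⁻¹` we have `Ṁ = -P⁻¹ṖP⁻¹`, and substituting the Riccati equation for `Ṗ` with the
closed-loop matrix `B = A₁ - PC₁ᵀR⁻¹C₁`, the `A₁`-terms cancel and what remains is
`-(P⁻¹QP⁻¹ + C₁ᵀR⁻¹C₁) = -P⁻¹(Q + PC₁ᵀR⁻¹C₁P)P⁻¹`.
-/

open Matrix

section Calculus

variable {𝕜 : Type*} [NontriviallyNormedField 𝕜] {m n : Type*} [Fintype n] {t : 𝕜}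

theorem hasDerivAt_matrix {M : 𝕜 → Matrix m n 𝕜} {M' : Matrix m n 𝕜} :
    HasDerivAt M M' t ↔ ∀ i j, HasDerivAt (fun s => M s i j) (M' i j) t :=
  hasDerivAt_pi.trans (forall_congr' fun _ => hasDerivAt_pi)

theorem HasDerivAt.dotProduct {x y : 𝕜 → n → 𝕜} {x' y' : n → 𝕜}
    (hx : HasDerivAt x x' t) (hy : HasDerivAt y y' t) :
    HasDerivAt (fun s => x s ⬝ᵥ y s) (x' ⬝ᵥ y t + x t ⬝ᵥ y') t := by
  simp only [_root_.dotProduct, ← Finset.sum_add_distrib]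
  exact HasDerivAt.fun_sum fun i _ => (hasDerivAt_pi.1 hx i).fun_mul (hasDerivAt_pi.1 hy i)

theorem HasDerivAt.mulVec {M : 𝕜 → Matrix m n 𝕜} {M' : Matrix m n 𝕜} {x : 𝕜 → n → 𝕜}
    {x' : n → 𝕜} (hM : HasDerivAt M M' t) (hx : HasDerivAt x x' t) :
    HasDerivAt (fun s => M s *ᵥ x s) (M' *ᵥ x t + M t *ᵥ x') t :=
  hasDerivAt_pi.2 fun i => (hasDerivAt_pi.1 hM i).dotProduct hx

theorem HasDerivAt.dotProduct_mulVec_self {M : 𝕜 → Matrix n n 𝕜} {M' B : Matrix n n 𝕜}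
    {x : 𝕜 → n → 𝕜} (hM : HasDerivAt M M' t) (hx : HasDerivAt x (B *ᵥ x t) t) :
    HasDerivAt (fun s => x s ⬝ᵥ (M s *ᵥ x s)) (x t ⬝ᵥ ((Bᵀ * M t + M' + M t * B) *ᵥ x t)) t := by
  convert hx.dotProduct (hM.mulVec hx) using 1
  rw [add_mulVec, add_mulVec, ← mulVec_mulVec, ← mulVec_mulVec, dotProduct_add, dotProduct_add,
    dotProduct_add, dotProduct_mulVec (x t), vecMul_transpose, add_assoc]

-- `HasDerivAt` only sees the topology of `Matrix n n 𝕜`, so any submultiplicative norm can be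
-- used to invoke the derivative of `Ring.inverse` in a complete normed algebra.
open scoped Norms.Operator in
theorem HasDerivAt.matrix_inv [CompleteSpace 𝕜] [DecidableEq n] {P : 𝕜 → Matrix n n 𝕜}
    {P' : Matrix n n 𝕜} (hP : HasDerivAt P P' t) (hdet : IsUnit (P t).det) :
    HasDerivAt (fun s => (P s)⁻¹) (-((P t)⁻¹ * P' * (P t)⁻¹)) t := by
  have : HasSummableGeomSeries (Matrix n n 𝕜) :=
    @instHasSummableGeomSeriesOfCompleteSpace _ _ (FiniteDimensional.complete 𝕜 _)
  have hu : IsUnit (P t) := (isUnit_iff_isUnit_det _).2 hdet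
  have hinv : (P t)⁻¹ = ↑hu.unit⁻¹ := by
    rw [nonsing_inv_eq_ringInverse, ← Ring.inverse_unit, hu.unit_spec]
  have h := (hasFDerivAt_ringInverse (𝕜 := 𝕜) hu.unit).comp_hasDerivAt t hP
  rw [_root_.neg_apply, ContinuousLinearMap.mulLeftRight_apply, ← hinv] at h
  simp only [nonsing_inv_eq_ringInverse] at h ⊢
  exact h

end Calculus

theorem riccati_closedLoop_identity {α : Type*} [CommRing α] {m p : Type*} [Fintype m]
    [DecidableEq m] [Fintype p] {A P Q : Matrix m m α} {C : Matrix p m α} {S : Matrix p p α}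
    (hP : IsUnit P.det) (hPs : P.IsSymm) (hS : S.IsSymm) :
    (A - P * Cᵀ * S * C)ᵀ * P⁻¹ + -(P⁻¹ * (A * P + P * Aᵀ + Q - P * Cᵀ * S * C * P) * P⁻¹)
      + P⁻¹ * (A - P * Cᵀ * S * C) = -(P⁻¹ * (Q + P * Cᵀ * S * C * P) * P⁻¹) := by
  have hT : (A - P * Cᵀ * S * C)ᵀ = Aᵀ - Cᵀ * S * C * P := by
    simp only [transpose_sub, transpose_mul, transpose_transpose, hS.eq, hPs.eq, Matrix.mul_assoc]
  rw [hT]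
  simp only [Matrix.mul_sub, Matrix.sub_mul, Matrix.mul_add, Matrix.add_mul, Matrix.mul_assoc,
    nonsing_inv_mul_cancel_left _ _ hP, mul_nonsing_inv _ hP, Matrix.mul_one]
  abel

theorem riccati_lyapunov_derivative_identity_general
    {m p : ℕ}
    (A₁ : ℝ → Matrix (Fin m) (Fin m) ℝ) (C₁ : ℝ → Matrix (Fin p) (Fin m) ℝ)
    (Q : ℝ → Matrix (Fin m) (Fin m) ℝ) (R : ℝ → Matrix (Fin p) (Fin p) ℝ)
    (P P' : ℝ → Matrix (Fin m) (Fin m) ℝ)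
    (η : ℝ → Fin m → ℝ)
    (hPsymm : ∀ t, (P t).IsSymm)
    (hPinv : ∀ t, IsUnit (P t).det)
    (hRsymm : ∀ t, (R t).IsSymm)
    (hPdiff : ∀ t i j, HasDerivAt (fun s => P s i j) (P' t i j) t)
    (hRic : ∀ t, P' t =
      A₁ t * P t + P t * (A₁ t)ᵀ + Q t - P t * (C₁ t)ᵀ * (R t)⁻¹ * C₁ t * P t)
    (hη : ∀ t, HasDerivAt η ((A₁ t - P t * (C₁ t)ᵀ * (R t)⁻¹ * C₁ t) *ᵥ η t) t)
    (t : ℝ) :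
    HasDerivAt (fun s => η s ⬝ᵥ ((P s)⁻¹ *ᵥ η s))
      (-(η t ⬝ᵥ
        (((P t)⁻¹ * (Q t + P t * (C₁ t)ᵀ * (R t)⁻¹ * C₁ t * P t) * (P t)⁻¹) *ᵥ η t))) t := by
  have hPinv' := (hasDerivAt_matrix.2 (hPdiff t)).matrix_inv (hPinv t)
  have hV := hPinv'.dotProduct_mulVec_self (hη t)
  rwa [hRic t, riccati_closedLoop_identity (hPinv t) (hPsymm t) (hRsymm t).inv, neg_mulVec,
    dotProduct_neg] at hV

/-- Along the Riccati differential equation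
`Ṗ = A₁P + PA₁ᵀ + Q − PC₁ᵀR⁻¹C₁P` and the estimation-error equation
`η̃̇ = [A₁ − PC₁ᵀR⁻¹C₁]η̃`, the function `V₂(t) = η̃ᵀP⁻¹η̃` satisfies
`dV₂/dt = −η̃ᵀP⁻¹(Q + PC₁ᵀR⁻¹C₁P)P⁻¹η̃`. -/
theorem riccati_lyapunov_derivative_identity
    {m p : ℕ}
    (A₁ : ℝ → Matrix (Fin m) (Fin m) ℝ) (C₁ : ℝ → Matrix (Fin p) (Fin m) ℝ)
    (Q : ℝ → Matrix (Fin m) (Fin m) ℝ) (R : ℝ → Matrix (Fin p) (Fin p) ℝ)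
    (P P' : ℝ → Matrix (Fin m) (Fin m) ℝ)
    (η : ℝ → Fin m → ℝ)
    (hPsymm : ∀ t, (P t).IsSymm)
    (hPinv : ∀ t, IsUnit (P t).det)
    (hQsymm : ∀ t, (Q t).IsSymm)
    (hRsymm : ∀ t, (R t).IsSymm)
    (hRinv : ∀ t, IsUnit (R t).det)
    (hPdiff : ∀ t i j, HasDerivAt (fun s => P s i j) (P' t i j) t)
    (hRic : ∀ t, P' t =
      A₁ t * P t + P t * (A₁ t)ᵀ + Q t - P t * (C₁ t)ᵀ * (R t)⁻¹ * C₁ t * P t)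
    (hη : ∀ t, HasDerivAt η ((A₁ t - P t * (C₁ t)ᵀ * (R t)⁻¹ * C₁ t) *ᵥ η t) t)
    (t : ℝ) :
    HasDerivAt (fun s => η s ⬝ᵥ ((P s)⁻¹ *ᵥ η s))
      (-(η t ⬝ᵥ
        (((P t)⁻¹ * (Q t + P t * (C₁ t)ᵀ * (R t)⁻¹ * C₁ t * P t) * (P t)⁻¹) *ᵥ η t))) t :=
  riccati_lyapunov_derivative_identity_general A₁ C₁ Q R P P' η hPsymm hPinv hRsymm hPdiff hRic hη t
end

section
/- Let c₁, c₂, c₃ ∈ ℝ and let v₁, v₂, v₃ : [0,∞) → ℝ be differentiable functions with v_i(0) ≤ c_i for i = 1,2,3. Suppose that for each i ∈ {1,2,3} and every t ≥ 0: if v_i(t) = c_i and v_j(t) ≤ c_j for all j ≠ i, then v_i'(t) < 0. Then v_i(t) ≤ c_i for all t ≥ 0 and all i ∈ {1,2,3}. -/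
open Filter Set Topology

theorem HasDerivAt.eventually_nhdsGT_lt_of_neg {f : ℝ → ℝ} {f' x : ℝ}
    (hf : HasDerivAt f f' x) (hf' : f' < 0) : ∀ᶠ y in 𝓝[>] x, f y < f x := by
  filter_upwards [hf.hasDerivWithinAt.limsup_slope_le' (lt_irrefl x) hf', self_mem_nhdsWithin]
    with y hslope hxy
  exact (slope_neg_iff_of_le (le_of_lt hxy)).1 hslope

theorem HasDerivAt.eventually_nhdsGT_le {f : ℝ → ℝ} {f' x c : ℝ} (hf : HasDerivAt f f' x)
    (hx : f x ≤ c) (hboundary : f x = c → f' < 0) : ∀ᶠ y in 𝓝[>] x, f y ≤ c := by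
  rcases hx.eq_or_lt with heq | hlt
  · filter_upwards [hf.eventually_nhdsGT_lt_of_neg (hboundary heq)] with y hy
    exact heq ▸ hy.le
  · filter_upwards [nhdsWithin_le_nhds (hf.continuousAt.eventually (gt_mem_nhds hlt))]
      with y hy
    exact hy.le

/-- The sublevel set `{t | ∀ i, v i t ≤ c i}` is closed on compact intervals by continuity,
and it extends to the right of each of its points by `HasDerivAt.eventually_nhdsGT_le`;
real induction (`IsClosed.Icc_subset_of_forall_mem_nhdsWithin`) does the rest. -/
theorem forall_le_of_deriv_neg_boundary {ι : Type*} [Finite ι] {v v' : ι → ℝ → ℝ}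
    {c : ι → ℝ} {a : ℝ} (hv : ∀ i t, a ≤ t → HasDerivAt (v i) (v' i t) t)
    (ha : ∀ i, v i a ≤ c i)
    (hboundary : ∀ t, a ≤ t → (∀ j, v j t ≤ c j) → ∀ i, v i t = c i → v' i t < 0) :
    ∀ t, a ≤ t → ∀ i, v i t ≤ c i := by
  intro b hab
  set s := {t | ∀ i, v i t ≤ c i}
  have hclosed : IsClosed (s ∩ Icc a b) := by
    have hcont : ContinuousOn (fun t i ↦ v i t) (Icc a b) :=
      continuousOn_pi.2 fun i t ht ↦ (hv i t ht.1).continuousAt.continuousWithinAt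
    rw [inter_comm]
    exact hcont.preimage_isClosed_of_isClosed isClosed_Icc isClosed_Iic
  refine hclosed.Icc_subset_of_forall_mem_nhdsWithin ha (fun x hx ↦ ?_) ⟨hab, le_rfl⟩
  exact eventually_all.2 fun i ↦
    (hv i x hx.2.1).eventually_nhdsGT_le (hx.1 i) (hboundary x hx.2.1 hx.1 i)

/-- Coupled sublevel-set invariance principle for three differentiable
functions: if each `vᵢ` decreases strictly on its own boundary `{vᵢ = cᵢ}` while the
others satisfy `vⱼ ≤ cⱼ`, then the product of sublevel sets is positively invariant. -/
theorem coupled_sublevel_set_invariance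
    (c₁ c₂ c₃ : ℝ) (v₁ v₂ v₃ v₁' v₂' v₃' : ℝ → ℝ)
    (hv₁ : ∀ t, 0 ≤ t → HasDerivAt v₁ (v₁' t) t)
    (hv₂ : ∀ t, 0 ≤ t → HasDerivAt v₂ (v₂' t) t)
    (hv₃ : ∀ t, 0 ≤ t → HasDerivAt v₃ (v₃' t) t)
    (h₀₁ : v₁ 0 ≤ c₁) (h₀₂ : v₂ 0 ≤ c₂) (h₀₃ : v₃ 0 ≤ c₃)
    (hb₁ : ∀ t, 0 ≤ t → v₁ t = c₁ → v₂ t ≤ c₂ → v₃ t ≤ c₃ → v₁' t < 0)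
    (hb₂ : ∀ t, 0 ≤ t → v₂ t = c₂ → v₁ t ≤ c₁ → v₃ t ≤ c₃ → v₂' t < 0)
    (hb₃ : ∀ t, 0 ≤ t → v₃ t = c₃ → v₁ t ≤ c₁ → v₂ t ≤ c₂ → v₃' t < 0) :
    ∀ t, 0 ≤ t → v₁ t ≤ c₁ ∧ v₂ t ≤ c₂ ∧ v₃ t ≤ c₃ := by
  have hle := forall_le_of_deriv_neg_boundary (v := ![v₁, v₂, v₃]) (v' := ![v₁', v₂', v₃'])
    (c := ![c₁, c₂, c₃]) (a := 0) ?_ ?_ ?_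
  · exact fun t ht ↦ ⟨hle t ht 0, hle t ht 1, hle t ht 2⟩
  · intro i
    fin_cases i
    exacts [hv₁, hv₂, hv₃]
  · intro i
    fin_cases i
    exacts [h₀₁, h₀₂, h₀₃]
  · intro t ht hsub i
    obtain ⟨h₁, h₂, h₃⟩ : v₁ t ≤ c₁ ∧ v₂ t ≤ c₂ ∧ v₃ t ≤ c₃ := ⟨hsub 0, hsub 1, hsub 2⟩
    fin_cases i
    exacts [fun h ↦ hb₁ t ht h h₂ h₃, fun h ↦ hb₂ t ht h h₁ h₃, fun h ↦ hb₃ t ht h h₁ h₂]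
end

section
/- Let (ϑ(t), η̃(t)) ∈ ℝⁿ × ℝ^m be a C¹ curve on [0,∞). Let V₁ : ℝⁿ → ℝ be C¹ with α₁(‖ϑ‖) ≤ V₁(ϑ) ≤ α₂(‖ϑ‖) for all ϑ, where α₁, α₂ are class K∞ and α₃, α₄ are class K, and suppose that for every t ≥ 0 with ‖ϑ(t)‖ ≥ α₄(‖η̃(t)‖) one has (d/dt)V₁(ϑ(t)) ≤ −α₃(‖ϑ(t)‖). Let V₂(t) = η̃(t)ᵀ P(t)⁻¹ η̃(t), where P(t) is symmetric positive definite with P(t)⁻¹ ⪰ p₁I (p₁ > 0), and suppose V₂ is differentiable with (d/dt)V₂(t) ≤ −k₁V₂(t) for some k₁ > 0. Let c₁, c₂ > 0 satisfy c₁ ≥ α₂(α₄(√(c₂/p₁))). If V₁(ϑ(0)) ≤ c₁ and V₂(0) ≤ c₂, then V₁(ϑ(t)) ≤ c₁ and V₂(t) ≤ c₂ for all t ≥ 0. -/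
open Matrix Set

noncomputable section

/-- The Euclidean norm of a vector in `ℝ^m`. -/
def euclNorm {m : ℕ} (x : Fin m → ℝ) : ℝ := Real.sqrt (x ⬝ᵥ x)

/-- A class `K` function: continuous, strictly increasing on `[0,∞)`, vanishing at `0`,
and nonnegative. -/
def IsClassK (f : ℝ → ℝ) : Prop :=
  ContinuousOn f (Ici 0) ∧ StrictMonoOn f (Ici 0) ∧ f 0 = 0 ∧ ∀ r, 0 ≤ r → 0 ≤ f r

/-- A class `K∞` function. -/
def IsClassKInf (f : ℝ → ℝ) : Prop :=
  IsClassK f ∧ Filter.Tendsto f Filter.atTop Filter.atTop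

/-!
Both Lyapunov functions are fenced by their levels: a function whose right derivative is
nonpositive wherever it has reached the level `c` cannot cross `c` (compare it with `c + ε t`
and let `ε → 0`). For `V₂` this is immediate from `V̇₂ ≤ -k₁ V₂`. Hence `η̃` stays in the ball
of radius `√(c₂/p₁)`, and the choice `c₁ ≥ α₂(α₄(√(c₂/p₁)))` makes `V₁(ϑ) ≥ c₁` force
`‖ϑ‖ ≥ α₄(‖η̃‖)`, where the decrease condition on `V₁` applies.
-/

open Filter Topology

theorem image_le_of_deriv_right_nonpos_of_le {f f' : ℝ → ℝ} {a b c : ℝ}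
    (hf : ContinuousOn f (Icc a b)) (hf' : ∀ x ∈ Ico a b, HasDerivWithinAt f (f' x) (Ici x) x)
    (ha : f a ≤ c) (bound : ∀ x ∈ Ico a b, c ≤ f x → f' x ≤ 0) :
    ∀ ⦃x⦄, x ∈ Icc a b → f x ≤ c := by
  intro x hx
  have fenced : ∀ ε > 0, f x ≤ c + ε * (x - a) := by
    intro ε hε
    have hB : ∀ y, HasDerivAt (fun y => c + ε * (y - a)) ε y := fun y => by
      simpa using (((hasDerivAt_id y).sub_const a).const_mul ε).const_add c
    refine image_le_of_deriv_right_lt_deriv_boundary hf hf' (by simpa using ha) hB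
      (fun y hy hfy => ?_) hx
    have above : c ≤ f y := hfy ▸ le_add_of_nonneg_right (mul_nonneg hε.le (sub_nonneg.2 hy.1))
    exact (bound y hy above).trans_lt hε
  have hlim : Tendsto (fun ε => c + ε * (x - a)) (𝓝[>] 0) (𝓝 c) := by
    have : Continuous fun ε : ℝ => c + ε * (x - a) := by fun_prop
    exact (this.tendsto' 0 c (by simp)).mono_left nhdsWithin_le_nhds
  exact ge_of_tendsto hlim (eventually_mem_nhdsWithin.mono fenced)

theorem le_of_derivWithin_nonpos_of_le {g : ℝ → ℝ} {a c : ℝ}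
    (hg : DifferentiableOn ℝ g (Ici a)) (ha : g a ≤ c)
    (bound : ∀ t, a ≤ t → c ≤ g t → derivWithin g (Ici a) t ≤ 0) :
    ∀ t, a ≤ t → g t ≤ c := fun _ ht =>
  image_le_of_deriv_right_nonpos_of_le (hg.continuousOn.mono Icc_subset_Ici_self)
    (fun x hx => (hg x hx.1).hasDerivWithinAt.mono (Ici_subset_Ici.2 hx.1)) ha
    (fun x hx => bound x hx.1) ⟨ht, le_rfl⟩

theorem mul_dotProduct_self_le_of_posSemidef_sub {ι : Type*} [Fintype ι] [DecidableEq ι]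
    {A : Matrix ι ι ℝ} {p : ℝ} (hA : (A - p • (1 : Matrix ι ι ℝ)).PosSemidef) (x : ι → ℝ) :
    p * (x ⬝ᵥ x) ≤ x ⬝ᵥ (A *ᵥ x) := by
  have h := hA.dotProduct_mulVec_nonneg x
  simp only [star_trivial, sub_mulVec, smul_mulVec, one_mulVec, dotProduct_sub,
    dotProduct_smul, smul_eq_mul] at h
  linarith

theorem euclNorm_le_sqrt_div_of_posSemidef_sub {m : ℕ} {A : Matrix (Fin m) (Fin m) ℝ} {p c : ℝ}
    (hp : 0 < p) (hA : (A - p • (1 : Matrix (Fin m) (Fin m) ℝ)).PosSemidef) {x : Fin m → ℝ}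
    (hx : x ⬝ᵥ (A *ᵥ x) ≤ c) : euclNorm x ≤ Real.sqrt (c / p) := by
  apply Real.sqrt_le_sqrt
  rw [le_div_iff₀ hp]
  linarith [mul_dotProduct_self_le_of_posSemidef_sub hA x]

namespace IsClassK

variable {f : ℝ → ℝ} {a b : ℝ}

theorem apply_le_apply (hf : IsClassK f) (ha : 0 ≤ a) (hab : a ≤ b) : f a ≤ f b :=
  hf.2.1.monotoneOn ha (ha.trans hab) hab

theorem le_of_apply_le (hf : IsClassK f) (ha : 0 ≤ a) (hb : 0 ≤ b) (h : f a ≤ f b) : a ≤ b :=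
  (hf.2.1.le_iff_le ha hb).1 h

end IsClassK

theorem invariance_of_product_sublevel_sets_general
    {n m : ℕ} (p₁ k₁ c₁ c₂ : ℝ) (hp₁ : 0 < p₁) (hk₁ : 0 < k₁)
    (hc₂ : 0 < c₂)
    (ϑ : ℝ → EuclideanSpace ℝ (Fin n)) (ηe : ℝ → Fin m → ℝ)
    (P : ℝ → Matrix (Fin m) (Fin m) ℝ)
    (V₁ : EuclideanSpace ℝ (Fin n) → ℝ)
    (α₁ α₂ α₃ α₄ : ℝ → ℝ)
    (hϑ : ContDiffOn ℝ 1 ϑ (Ici 0))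
    (hV₁C1 : ContDiff ℝ 1 V₁)
    (hα₂ : IsClassKInf α₂)
    (hα₃ : IsClassK α₃) (hα₄ : IsClassK α₄)
    (hV₁bound : ∀ x : EuclideanSpace ℝ (Fin n), α₁ ‖x‖ ≤ V₁ x ∧ V₁ x ≤ α₂ ‖x‖)
    (hdV₁ : ∀ t, 0 ≤ t → α₄ (euclNorm (ηe t)) ≤ ‖ϑ t‖ →
      derivWithin (fun s => V₁ (ϑ s)) (Ici 0) t ≤ -α₃ ‖ϑ t‖)
    (hP : ∀ t, 0 ≤ t → (P t).PosDef ∧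
      ((P t)⁻¹ - p₁ • (1 : Matrix (Fin m) (Fin m) ℝ)).PosSemidef)
    (hV₂diff : DifferentiableOn ℝ (fun s => ηe s ⬝ᵥ ((P s)⁻¹ *ᵥ ηe s)) (Ici 0))
    (hdV₂ : ∀ t, 0 ≤ t →
      derivWithin (fun s => ηe s ⬝ᵥ ((P s)⁻¹ *ᵥ ηe s)) (Ici 0) t ≤
        -k₁ * (ηe t ⬝ᵥ ((P t)⁻¹ *ᵥ ηe t)))
    (hcc : α₂ (α₄ (Real.sqrt (c₂ / p₁))) ≤ c₁)
    (h₀₁ : V₁ (ϑ 0) ≤ c₁)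
    (h₀₂ : ηe 0 ⬝ᵥ ((P 0)⁻¹ *ᵥ ηe 0) ≤ c₂) :
    ∀ t, 0 ≤ t → V₁ (ϑ t) ≤ c₁ ∧ ηe t ⬝ᵥ ((P t)⁻¹ *ᵥ ηe t) ≤ c₂ := by
  have hV₂ : ∀ t, 0 ≤ t → ηe t ⬝ᵥ ((P t)⁻¹ *ᵥ ηe t) ≤ c₂ :=
    le_of_derivWithin_nonpos_of_le hV₂diff h₀₂ fun t ht hle =>
      (hdV₂ t ht).trans (mul_nonpos_of_nonpos_of_nonneg (neg_nonpos.2 hk₁.le) (hc₂.le.trans hle))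
  have hη : ∀ t, 0 ≤ t → euclNorm (ηe t) ≤ Real.sqrt (c₂ / p₁) := fun t ht =>
    euclNorm_le_sqrt_div_of_posSemidef_sub hp₁ (hP t ht).2 (hV₂ t ht)
  have hV₁diff : DifferentiableOn ℝ (fun s => V₁ (ϑ s)) (Ici 0) :=
    (hV₁C1.differentiable one_ne_zero).comp_differentiableOn (hϑ.differentiableOn one_ne_zero)
  have hV₁ : ∀ t, 0 ≤ t → V₁ (ϑ t) ≤ c₁ :=
    le_of_derivWithin_nonpos_of_le hV₁diff h₀₁ fun t ht hle => by
      have gain : α₄ (Real.sqrt (c₂ / p₁)) ≤ ‖ϑ t‖ :=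
        hα₂.1.le_of_apply_le (hα₄.2.2.2 _ (Real.sqrt_nonneg _)) (norm_nonneg _)
          (hcc.trans (hle.trans (hV₁bound _).2))
      have small : α₄ (euclNorm (ηe t)) ≤ α₄ (Real.sqrt (c₂ / p₁)) :=
        hα₄.apply_le_apply (Real.sqrt_nonneg _) (hη t ht)
      exact (hdV₁ t ht (small.trans gain)).trans (neg_nonpos.2 (hα₃.2.2.2 _ (norm_nonneg _)))
  exact fun t ht => ⟨hV₁ t ht, hV₂ t ht⟩

/-- Positive invariance of `Ω₁ × Ω₂ = {V₁ ≤ c₁} × {V₂ ≤ c₂}` for the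
state-feedback closed loop with extended Kalman filter. -/
theorem invariance_of_product_sublevel_sets
    {n m : ℕ} (p₁ k₁ c₁ c₂ : ℝ) (hp₁ : 0 < p₁) (hk₁ : 0 < k₁)
    (hc₁ : 0 < c₁) (hc₂ : 0 < c₂)
    (ϑ : ℝ → EuclideanSpace ℝ (Fin n)) (ηe : ℝ → Fin m → ℝ)
    (P : ℝ → Matrix (Fin m) (Fin m) ℝ)
    (V₁ : EuclideanSpace ℝ (Fin n) → ℝ)
    (α₁ α₂ α₃ α₄ : ℝ → ℝ)
    (hϑ : ContDiffOn ℝ 1 ϑ (Ici 0)) (hηe : ContDiffOn ℝ 1 ηe (Ici 0))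
    (hV₁C1 : ContDiff ℝ 1 V₁)
    (hα₁ : IsClassKInf α₁) (hα₂ : IsClassKInf α₂)
    (hα₃ : IsClassK α₃) (hα₄ : IsClassK α₄)
    (hV₁bound : ∀ x : EuclideanSpace ℝ (Fin n), α₁ ‖x‖ ≤ V₁ x ∧ V₁ x ≤ α₂ ‖x‖)
    (hdV₁ : ∀ t, 0 ≤ t → α₄ (euclNorm (ηe t)) ≤ ‖ϑ t‖ →
      derivWithin (fun s => V₁ (ϑ s)) (Ici 0) t ≤ -α₃ ‖ϑ t‖)
    (hP : ∀ t, 0 ≤ t → (P t).PosDef ∧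
      ((P t)⁻¹ - p₁ • (1 : Matrix (Fin m) (Fin m) ℝ)).PosSemidef)
    (hV₂diff : DifferentiableOn ℝ (fun s => ηe s ⬝ᵥ ((P s)⁻¹ *ᵥ ηe s)) (Ici 0))
    (hdV₂ : ∀ t, 0 ≤ t →
      derivWithin (fun s => ηe s ⬝ᵥ ((P s)⁻¹ *ᵥ ηe s)) (Ici 0) t ≤
        -k₁ * (ηe t ⬝ᵥ ((P t)⁻¹ *ᵥ ηe t)))
    (hcc : α₂ (α₄ (Real.sqrt (c₂ / p₁))) ≤ c₁)
    (h₀₁ : V₁ (ϑ 0) ≤ c₁)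
    (h₀₂ : ηe 0 ⬝ᵥ ((P 0)⁻¹ *ᵥ ηe 0) ≤ c₂) :
    ∀ t, 0 ≤ t → V₁ (ϑ t) ≤ c₁ ∧ ηe t ⬝ᵥ ((P t)⁻¹ *ᵥ ηe t) ≤ c₂ :=
  invariance_of_product_sublevel_sets_general p₁ k₁ c₁ c₂ hp₁ hk₁ hc₂ ϑ ηe P V₁ α₁ α₂ α₃ α₄ hϑ hV₁C1
    hα₂ hα₃ hα₄ hV₁bound hdV₁ hP hV₂diff hdV₂ hcc h₀₁ h₀₂
end
end

section
/- Let ε, k, k_b > 0 and let w : [0,T₀] → [0,∞) be differentiable and satisfy ε·w'(t) ≤ −k·w(t) + ε·k_b·√(w(t)) for all t ∈ [0,T₀]. Then, for all t ∈ [0,T₀], √(w(t)) ≤ e^{−kt/(2ε)}·√(w(0)) + (ε k_b / k)·(1 − e^{−kt/(2ε)}); in particular √(w(t)) ≤ e^{−kt/(2ε)}·√(w(0)) + ε k_b/k. -/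
/-!
For `w' ≤ -α w + β √w`, the function `√w` is a subsolution of the linear equation
`x' = -(α/2) (x - β/α)`, whose solution relaxes exponentially to `β/α`. Since `√` is not
differentiable at `0`, compare instead `w` with the square of the solution `A` started from
`√(w 0) + δ` with target `β/α + δ`: at a contact point `w = A²` we have `√w = A`, and the
inequality gives `w' ≤ (A²)' - α δ A < (A²)'`, so `w` never crosses `A²`. Let `δ → 0`.
-/

open Set Real

theorem image_le_of_hasDerivWithinAt_Icc_of_lt_deriv_boundary {f f' B B' : ℝ → ℝ} {a b : ℝ}
    (hf : ∀ x ∈ Icc a b, HasDerivWithinAt f (f' x) (Icc a b) x) (ha : f a ≤ B a)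
    (hB : ∀ x, HasDerivAt B (B' x) x) (bound : ∀ x ∈ Ico a b, f x = B x → f' x < B' x) :
    ∀ x ∈ Icc a b, f x ≤ B x := fun _ hx =>
  image_le_of_deriv_right_lt_deriv_boundary (fun x hx => (hf x hx).continuousWithinAt)
    (fun x hx => (hf x (Ico_subset_Icc_self hx)).mono_of_mem_nhdsWithin
      (Icc_mem_nhdsGE_of_mem hx))
    ha hB bound hx

noncomputable def expRelaxation (r c a t : ℝ) : ℝ := c + (a - c) * exp (-(r * t))

theorem hasDerivAt_expRelaxation (r c a t : ℝ) :
    HasDerivAt (expRelaxation r c a) (-r * (expRelaxation r c a t - c)) t := by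
  have hexp : HasDerivAt (fun s => exp (-(r * s))) (exp (-(r * t)) * -r) t := by
    simpa using ((hasDerivAt_id t).const_mul r).neg.exp
  refine ((hexp.const_mul (a - c)).const_add c).congr_deriv ?_
  simp only [expRelaxation]
  ring

theorem expRelaxation_zero (r c a : ℝ) : expRelaxation r c a 0 = a := by
  simp [expRelaxation]

theorem expRelaxation_add_add (r c a δ t : ℝ) :
    expRelaxation r (c + δ) (a + δ) t = expRelaxation r c a t + δ := by
  simp only [expRelaxation]
  ring

theorem expRelaxation_pos {r c a t : ℝ} (hr : 0 ≤ r) (hc : 0 ≤ c) (ha : 0 < a) (ht : 0 ≤ t) :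
    0 < expRelaxation r c a t := by
  have hexp_le_one : exp (-(r * t)) ≤ 1 := exp_le_one_iff.mpr (by nlinarith)
  have hexp_pos : 0 < exp (-(r * t)) := exp_pos _
  simp only [expRelaxation]
  nlinarith

theorem sqrt_le_expRelaxation_of_deriv_le {α β T : ℝ} {w w' : ℝ → ℝ} (hα : 0 < α) (hβ : 0 ≤ β)
    (hw : ∀ t ∈ Icc 0 T, HasDerivWithinAt w (w' t) (Icc 0 T) t)
    (hineq : ∀ t ∈ Icc 0 T, w' t ≤ -α * w t + β * √(w t)) :
    ∀ t ∈ Icc 0 T, √(w t) ≤ expRelaxation (α / 2) (β / α) (√(w 0)) t := by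
  intro t ht
  refine le_of_forall_pos_le_add fun δ hδ => ?_
  set A := expRelaxation (α / 2) (β / α + δ) (√(w 0) + δ)
  have hA_pos : ∀ x, 0 ≤ x → 0 < A x := fun x hx =>
    expRelaxation_pos (by positivity) (by positivity) (by positivity) hx
  have hA := hasDerivAt_expRelaxation (α / 2) (β / α + δ) (√(w 0) + δ)
  have hw_le : ∀ x ∈ Icc 0 T, w x ≤ A x * A x := by
    refine image_le_of_hasDerivWithinAt_Icc_of_lt_deriv_boundary hw ?_
      (fun x => (hA x).mul (hA x)) fun x hx hcontact => ?_
    · rw [show A 0 = √(w 0) + δ from expRelaxation_zero .., ← sq]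
      exact (sqrt_le_iff.mp (le_add_of_nonneg_right hδ.le)).2
    · have hAx := hA_pos x hx.1
      have hsqrt : √(w x) = A x := by rw [hcontact, sqrt_mul_self hAx.le]
      have hw' := hineq x (Ico_subset_Icc_self hx)
      rw [hsqrt, hcontact] at hw'
      have hslack := mul_pos (mul_pos hα hδ) hAx
      have hB' : -(α / 2) * (A x - (β / α + δ)) * A x + A x * (-(α / 2) * (A x - (β / α + δ)))
          = -α * (A x * A x) + β * A x + α * δ * A x := by
        field_simp
        ring
      linarith
  calc √(w t) ≤ A t := by
        rw [sqrt_le_iff, sq]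
        exact ⟨(hA_pos t ht.1).le, hw_le t ht⟩
    _ = expRelaxation (α / 2) (β / α) (√(w 0)) t + δ := expRelaxation_add_add ..

theorem fast_variable_comparison_general
    (ε k kb T₀ : ℝ) (hε : 0 < ε) (hk : 0 < k) (hkb : 0 < kb)
    (w w' : ℝ → ℝ)
    (hw : ∀ t ∈ Icc (0:ℝ) T₀, HasDerivWithinAt w (w' t) (Icc 0 T₀) t)
    (hineq : ∀ t ∈ Icc (0:ℝ) T₀, ε * w' t ≤ -k * w t + ε * kb * Real.sqrt (w t)) :
    ∀ t ∈ Icc (0:ℝ) T₀,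
      Real.sqrt (w t) ≤ Real.exp (-(k * t) / (2 * ε)) * Real.sqrt (w 0)
          + (ε * kb / k) * (1 - Real.exp (-(k * t) / (2 * ε))) ∧
      Real.sqrt (w t) ≤ Real.exp (-(k * t) / (2 * ε)) * Real.sqrt (w 0) + ε * kb / k := by
  intro t ht
  have hineq' : ∀ s ∈ Icc 0 T₀, w' s ≤ -(k / ε) * w s + kb * √(w s) := fun s hs => by
    have := hineq s hs
    field_simp
    linarith
  have hsqrt := sqrt_le_expRelaxation_of_deriv_le (div_pos hk hε) hkb.le hw hineq' t ht
  have hrel : expRelaxation (k / ε / 2) (kb / (k / ε)) (√(w 0)) t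
      = exp (-(k * t) / (2 * ε)) * √(w 0) + ε * kb / k * (1 - exp (-(k * t) / (2 * ε))) := by
    rw [expRelaxation, show -(k / ε / 2 * t) = -(k * t) / (2 * ε) by ring,
      show kb / (k / ε) = ε * kb / k by field_simp]
    ring
  rw [hrel] at hsqrt
  have hexp_pos := exp_pos (-(k * t) / (2 * ε))
  have hc : 0 ≤ ε * kb / k := by positivity
  exact ⟨hsqrt, by nlinarith⟩

/-- Scalar comparison lemma for the fast variable:
from `ε·ẇ ≤ −k·w + ε·k_b·√w` on `[0,T₀]` one gets
`√(w t) ≤ e^{−kt/(2ε)}√(w 0) + (εk_b/k)(1 − e^{−kt/(2ε)})`, and in particular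
`√(w t) ≤ e^{−kt/(2ε)}√(w 0) + εk_b/k`. -/
theorem fast_variable_comparison
    (ε k kb T₀ : ℝ) (hε : 0 < ε) (hk : 0 < k) (hkb : 0 < kb) (hT₀ : 0 < T₀)
    (w w' : ℝ → ℝ)
    (hwnn : ∀ t ∈ Icc (0:ℝ) T₀, 0 ≤ w t)
    (hw : ∀ t ∈ Icc (0:ℝ) T₀, HasDerivWithinAt w (w' t) (Icc 0 T₀) t)
    (hineq : ∀ t ∈ Icc (0:ℝ) T₀, ε * w' t ≤ -k * w t + ε * kb * Real.sqrt (w t)) :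
    ∀ t ∈ Icc (0:ℝ) T₀,
      Real.sqrt (w t) ≤ Real.exp (-(k * t) / (2 * ε)) * Real.sqrt (w 0)
          + (ε * kb / k) * (1 - Real.exp (-(k * t) / (2 * ε))) ∧
      Real.sqrt (w t) ≤ Real.exp (-(k * t) / (2 * ε)) * Real.sqrt (w 0) + ε * kb / k :=
  fast_variable_comparison_general ε k kb T₀ hε hk hkb w w' hw hineq
end

section
/- Fix constants k, k_b, c > 0, an integer ρ ≥ 1, and β > (k_b/k)². Then there exist ε₃ > 0 and a function T : (0,ε₃] → (0,∞) with T(ε) → 0 as ε → 0⁺ such that: for every ε ∈ (0,ε₃] and every differentiable w : [0,∞) → [0,∞) satisfying ε·w'(t) ≤ −k·w(t) + ε·k_b·√(w(t)) for all t ≥ 0 and w(0) ≤ c²/ε^{2ρ}, one has w(t) ≤ β·ε² for all t ≥ T(ε). -/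
/-!
Fix `β'` with `(k_b/k)² < β' < β` and put `s = √β'`, `δ = k - |k_b|/s > 0`. Above the level
`β'ε²` one has `√w ≥ sε`, so the drift term `ε k_b √w` is absorbed by `(|k_b|/s) w` and
`w' ≤ -(δ/ε) w`. A fencing argument then gives `w t ≤ β'ε² + (c²/ε^{2ρ}) e^{-δt/ε}`, and the
second term is at most `(β - β')ε²` once `t ≥ T(ε) ≍ ε |log ε|`.
-/

open Set Filter Topology Real

theorem le_add_mul_exp_neg_of_hasDerivAt {w w' : ℝ → ℝ} {m A r t : ℝ} (hA : 0 < A)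
    (hw : ∀ x, 0 ≤ x → HasDerivAt w (w' x) x) (hw0 : w 0 ≤ m + A)
    (hdecay : ∀ x, 0 ≤ x → m < w x → w' x < -r * (w x - m)) (ht : 0 ≤ t) :
    w t ≤ m + A * exp (-r * t) := by
  have hB : ∀ x, HasDerivAt (fun x => m + A * exp (-r * x)) (A * (exp (-r * x) * -r)) x := by
    intro x
    simpa using (((hasDerivAt_id x).const_mul (-r)).exp.const_mul A).const_add m
  refine image_le_of_deriv_right_lt_deriv_boundary (b := t)
    (fun x hx => (hw x hx.1).continuousAt.continuousWithinAt)
    (fun x hx => (hw x hx.1).hasDerivWithinAt) (by simpa using hw0) hB ?_ ⟨ht, le_rfl⟩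
  intro x hx hwx
  have hgap : w x - m = A * exp (-r * x) := by rw [hwx]; ring
  have hmw : m < w x := by linarith [mul_pos hA (exp_pos (-r * x))]
  calc w' x < -r * (w x - m) := hdecay x hx.1 hmw
    _ = A * (exp (-r * x) * -r) := by rw [hgap]; ring

theorem neg_mul_add_mul_sqrt_le {k b s ε x : ℝ} (hs : 0 < s) (hε : 0 < ε)
    (hx : (s * ε) ^ 2 ≤ x) : -k * x + ε * b * √x ≤ -(k - |b| / s) * x := by
  have hsqrt : s * ε ≤ √x := Real.le_sqrt_of_sq_le hx
  have hx0 : 0 ≤ x := (sq_nonneg _).trans hx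
  have : ε * b * √x ≤ |b| / s * x := calc
    ε * b * √x ≤ ε * |b| * √x := by gcongr; exact le_abs_self b
    _ = |b| / s * ((s * ε) * √x) := by field_simp
    _ ≤ |b| / s * (√x * √x) := by gcongr
    _ = |b| / s * x := by rw [Real.mul_self_sqrt hx0]
  linarith

theorem sub_abs_div_sqrt_pos {k b β : ℝ} (hk : 0 < k) (hβ : (b / k) ^ 2 < β) :
    0 < k - |b| / √β := by
  rw [div_pow, ← sq_abs, ← div_pow] at hβ
  have hs : |b| / k < √β := (lt_sqrt (by positivity)).mpr hβ
  rw [sub_pos, div_lt_iff₀ ((div_nonneg (abs_nonneg b) hk.le).trans_lt hs)]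
  rwa [div_lt_iff₀ hk, mul_comm] at hs

theorem lt_neg_mul_sub_sq_of_mul_le {k b s ε x y : ℝ} (hs : 0 < s) (hε : 0 < ε)
    (hδ : 0 < k - |b| / s) (hx : (s * ε) ^ 2 < x) (hy : ε * y ≤ -k * x + ε * b * √x) :
    y < -((k - |b| / s) / ε) * (x - (s * ε) ^ 2) := by
  have hεy : ε * y ≤ -(k - |b| / s) * x := hy.trans (neg_mul_add_mul_sqrt_le hs hε hx.le)
  have hy' : y ≤ -((k - |b| / s) / ε) * x := calc
    y = ε * y / ε := by field_simp
    _ ≤ -(k - |b| / s) * x / ε := by gcongr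
    _ = -((k - |b| / s) / ε) * x := by ring
  have : 0 < (k - |b| / s) / ε * (s * ε) ^ 2 := by positivity
  linarith

theorem tendsto_mul_add_mul_abs_log (a b : ℝ) :
    Tendsto (fun x => x * (a + b * |log x|)) (𝓝[>] 0) (𝓝 0) := by
  have hid : Tendsto (fun x : ℝ => x) (𝓝[>] 0) (𝓝 0) :=
    tendsto_nhdsWithin_of_tendsto_nhds tendsto_id
  have hlog : Tendsto (fun x => |x * log x|) (𝓝[>] 0) (𝓝 0) := by
    simpa using (continuous_mul_log.abs.tendsto 0).mono_left nhdsWithin_le_nhds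
  have := (hid.mul_const a).add (hlog.const_mul b)
  rw [zero_mul, mul_zero, add_zero] at this
  refine this.congr' (eventually_nhdsWithin_of_forall fun x (hx : 0 < x) => ?_)
  rw [abs_mul, abs_of_pos hx]; ring

theorem exp_neg_div_mul_le_pow_div {K δ ε t : ℝ} {n : ℕ} (hK : 0 < K) (hδ : 0 < δ) (hε : 0 < ε)
    (ht : ε * (1 + |log K| + n * |log ε|) / δ ≤ t) : exp (-(δ / ε) * t) ≤ ε ^ n / K := by
  have hL : 1 + |log K| + n * |log ε| ≤ δ / ε * t := by
    rw [div_mul_eq_mul_div, le_div_iff₀ hε]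
    rw [div_le_iff₀ hδ] at ht
    linarith
  rw [← le_log_iff_exp_le (by positivity), log_div (by positivity) hK.ne', log_pow]
  linarith [le_abs_self (log K), mul_le_mul_of_nonneg_left (neg_le_abs (log ε)) n.cast_nonneg]

theorem fast_variable_reaching_time_general
    (k kb c : ℝ) (ρ : ℕ) (β : ℝ)
    (hk : 0 < k) (hc : 0 < c)
    (hβ : (kb / k) ^ 2 < β) :
    ∃ ε₃ > (0:ℝ), ∃ T : ℝ → ℝ,
      (∀ ε ∈ Ioc (0:ℝ) ε₃, 0 < T ε) ∧
      Filter.Tendsto T (nhdsWithin 0 (Ioi 0)) (nhds 0) ∧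
      ∀ ε ∈ Ioc (0:ℝ) ε₃, ∀ w w' : ℝ → ℝ,
        (∀ t, 0 ≤ t → 0 ≤ w t) →
        (∀ t, 0 ≤ t → HasDerivAt w (w' t) t) →
        (∀ t, 0 ≤ t → ε * w' t ≤ -k * w t + ε * kb * Real.sqrt (w t)) →
        w 0 ≤ c ^ 2 / ε ^ (2 * ρ) →
        ∀ t, T ε ≤ t → w t ≤ β * ε ^ 2 := by
  obtain ⟨β', hβ', hβ'β⟩ := exists_between hβ
  have hβ'0 : 0 < β' := (sq_nonneg _).trans_lt hβ'
  set s := √β'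
  have hs0 : 0 < s := sqrt_pos.mpr hβ'0
  set δ := k - |kb| / s
  have hδ : 0 < δ := sub_abs_div_sqrt_pos hk hβ'
  -- `K` and `n` are chosen so that `(c² / ε^{2ρ}) · ε^n / K = (β - β') ε²`.
  set K := c ^ 2 / (β - β')
  have hK : 0 < K := div_pos (by positivity) (by linarith)
  set n := 2 * ρ + 2
  set T : ℝ → ℝ := fun ε => ε * (1 + |log K| + n * |log ε|) / δ
  have hT : ∀ ε ∈ Ioc (0:ℝ) 1, 0 < T ε := fun ε hε => by have := hε.1; positivity
  refine ⟨1, one_pos, T, hT, by simpa using (tendsto_mul_add_mul_abs_log _ _).div_const δ, ?_⟩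
  intro ε hε w w' _ hdw hineq hw0 t ht
  have hε0 : 0 < ε := hε.1
  set m := β' * ε ^ 2
  have hm : m = (s * ε) ^ 2 := by rw [mul_pow, sq_sqrt hβ'0.le]
  have hdecay : ∀ x, 0 ≤ x → m < w x → w' x < -(δ / ε) * (w x - m) := fun x hx hmx =>
    hm ▸ lt_neg_mul_sub_sq_of_mul_le hs0 hε0 hδ (hm ▸ hmx) (hineq x hx)
  have hA : 0 < c ^ 2 / ε ^ (2 * ρ) := by positivity
  have hwt := le_add_mul_exp_neg_of_hasDerivAt hA hdw
    (hw0.trans (le_add_of_nonneg_left (by positivity))) hdecay ((hT ε hε).le.trans ht)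
  calc w t ≤ m + c ^ 2 / ε ^ (2 * ρ) * exp (-(δ / ε) * t) := hwt
    _ ≤ m + c ^ 2 / ε ^ (2 * ρ) * (ε ^ n / K) := by
      gcongr; exact exp_neg_div_mul_le_pow_div hK hδ hε0 ht
    _ = β * ε ^ 2 := by
      simp only [m, K, n]
      field_simp
      ring

/-- Reaching-time estimate for the fast variable: despite initial conditions
peaking like `1/ε^ρ`, the fast Lyapunov function enters `{w ≤ βε²}` within a time `T(ε) → 0`
and remains there, provided `β > (k_b/k)²`. -/
theorem fast_variable_reaching_time
    (k kb c : ℝ) (ρ : ℕ) (β : ℝ)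
    (hk : 0 < k) (hkb : 0 < kb) (hc : 0 < c) (hρ : 1 ≤ ρ)
    (hβ : (kb / k) ^ 2 < β) :
    ∃ ε₃ > (0:ℝ), ∃ T : ℝ → ℝ,
      (∀ ε ∈ Ioc (0:ℝ) ε₃, 0 < T ε) ∧
      Filter.Tendsto T (nhdsWithin 0 (Ioi 0)) (nhds 0) ∧
      ∀ ε ∈ Ioc (0:ℝ) ε₃, ∀ w w' : ℝ → ℝ,
        (∀ t, 0 ≤ t → 0 ≤ w t) →
        (∀ t, 0 ≤ t → HasDerivAt w (w' t) t) →
        (∀ t, 0 ≤ t → ε * w' t ≤ -k * w t + ε * kb * Real.sqrt (w t)) →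
        w 0 ≤ c ^ 2 / ε ^ (2 * ρ) →
        ∀ t, T ε ≤ t → w t ≤ β * ε ^ 2 :=
  fast_variable_reaching_time_general k kb c ρ β hk hc hβ
end
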